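/- The degree of an R-tableau T = (λ^{(0)},…,λ^{(r+s)}) of type η, defined as deg(T̲) − caps(T̲), equals deg(η̲ λ^{(0)}) + Σ_{a: R^{(a)}=E} deg(λ^{(a−1)} →_{i_a} λ^{(a)}) + Σ_{a: R^{(a)}=F} deg(λ^{(a−1)} ←_{i_a} λ^{(a)}), where the edge degrees deg(λ →ᵢ μ) and deg(λ ←ᵢ μ) are defined by the counting formulas deg(λ →ᵢ μ) = #{μ' < μ : λ →ᵢ μ'} − #{λ' > λ : λ' →ᵢ μ} and similarly for ←, taking values in {−1, 0, 1} as specified by the local label table. -/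
import Mathlib


open scoped Classical

/-- Labels of the vertices of a weight diagram. -/
inductive WLabel : Type
  | o | up | down | x
deriving DecidableEq

/-- A vertex is occupied if it is labelled `∧` or `∨`. -/
def occ (l : WLabel) : Prop := l = .up ∨ l = .down

/-- The eight allowed local configurations at vertices `i`, `i+1` for an
`E`-move `λ →ᵢ μ`. -/
def EPattern : WLabel × WLabel → WLabel × WLabel → Prop := fun a b =>
  (a = (.down, .o) ∧ b = (.o, .down)) ∨
  (a = (.up, .o) ∧ b = (.o, .up)) ∨
  (a = (.x, .down) ∧ b = (.down, .x)) ∨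
  (a = (.x, .up) ∧ b = (.up, .x)) ∨
  (a = (.x, .o) ∧ b = (.down, .up)) ∨
  (a = (.x, .o) ∧ b = (.up, .down)) ∨
  (a = (.down, .up) ∧ b = (.o, .x)) ∨
  (a = (.up, .down) ∧ b = (.o, .x))

/-- The eight allowed local configurations at vertices `i`, `i+1` for an
`F`-move `λ ←ᵢ μ`. -/
def FPattern : WLabel × WLabel → WLabel × WLabel → Prop := fun a b =>
  (a = (.o, .down) ∧ b = (.down, .o)) ∨
  (a = (.o, .up) ∧ b = (.up, .o)) ∨
  (a = (.down, .x) ∧ b = (.x, .down)) ∨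
  (a = (.up, .x) ∧ b = (.x, .up)) ∨
  (a = (.down, .up) ∧ b = (.x, .o)) ∨
  (a = (.up, .down) ∧ b = (.x, .o)) ∨
  (a = (.o, .x) ∧ b = (.down, .up)) ∨
  (a = (.o, .x) ∧ b = (.up, .down))

/-- `(w, pos)` is a chain of weight diagrams `w 0, w 1, …, w N` (an
`R`-tableau for the sequence of `E`'s and `F`'s encoded by `R : ℕ → Bool`,
`true` = `E`): the `a`-th step is an `E`-move (if `R a`) or an `F`-move at the
vertices `pos a`, `pos a + 1`. -/
def TableauChain (N : ℕ) (R : ℕ → Bool) (w : ℕ → ℤ → WLabel) (pos : ℕ → ℤ) : Prop :=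
  ∀ a : ℕ, a < N →
    (∀ j : ℤ, j ≠ pos a → j ≠ pos a + 1 → w (a + 1) j = w a j) ∧
    (if R a then
      EPattern (w a (pos a), w a (pos a + 1)) (w (a + 1) (pos a), w (a + 1) (pos a + 1))
    else
      FPattern (w a (pos a), w a (pos a + 1)) (w (a + 1) (pos a), w (a + 1) (pos a + 1)))

/-- `(p, q)` is a matched `∨∧`-pair of the weight diagram `η`, i.e. the pair
of endpoints of a cup of the cup diagram `η̲` (nested bracket matching, `∨`
opening and `∧` closing). -/
def MatchedPair (w : ℤ → WLabel) (p q : ℤ) : Prop :=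
  p < q ∧ w p = .down ∧ w q = .up ∧
  (Nat.card {x : ℤ | x ∈ Set.Ioo p q ∧ w x = .down}
    = Nat.card {x : ℤ | x ∈ Set.Ioo p q ∧ w x = .up}) ∧
  ∀ y ∈ Set.Ioo p q,
    Nat.card {x : ℤ | x ∈ Set.Ioc p y ∧ w x = .up}
      ≤ Nat.card {x : ℤ | x ∈ Set.Ioc p y ∧ w x = .down}

/-- `η ⊂ λ⁰`: the oriented cup diagram `η̲ λ⁰` is consistently oriented:
`λ⁰` has the same `∘`'s and `×`'s as `η`, each cup of `η̲` has exactly one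
endpoint labelled `∨` and one labelled `∧` under `λ⁰`, and at the rays
(unmatched occupied vertices) the labels of `λ⁰` and `η` agree. -/
def ConsistentType (η l0 : ℤ → WLabel) : Prop :=
  (∀ p : ℤ, (η p = .o ↔ l0 p = .o) ∧ (η p = .x ↔ l0 p = .x)) ∧
  (∀ p q : ℤ, MatchedPair η p q →
    ((l0 p = .down ∧ l0 q = .up) ∨ (l0 p = .up ∧ l0 q = .down))) ∧
  (∀ p : ℤ, occ (η p) → (∀ q : ℤ, ¬ MatchedPair η p q ∧ ¬ MatchedPair η q p) →
    l0 p = η p)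

/-- The number of clockwise cups of the cup diagram `η̲` oriented by the
weight `l0`, i.e. `deg(η̲ l0)` (a cup is clockwise iff its left endpoint is
labelled `∧`). -/
noncomputable def cupDiagramDeg (η l0 : ℤ → WLabel) : ℕ :=
  Nat.card {pq : ℤ × ℤ // MatchedPair η pq.1 pq.2 ∧ l0 pq.1 = .up}

/-- The `a`-th step of the stacked diagram contributes a cap (both endpoints on
the lower line). -/
def capStep (w : ℕ → ℤ → WLabel) (pos : ℕ → ℤ) (a : ℕ) : Prop :=
  occ (w a (pos a)) ∧ occ (w a (pos a + 1)) ∧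
    ¬ occ (w (a + 1) (pos a)) ∧ ¬ occ (w (a + 1) (pos a + 1))

/-- The `a`-th step of the stacked diagram contributes a cup (both endpoints on
the upper line). -/
def cupStep (w : ℕ → ℤ → WLabel) (pos : ℕ → ℤ) (a : ℕ) : Prop :=
  ¬ occ (w a (pos a)) ∧ ¬ occ (w a (pos a + 1)) ∧
    occ (w (a + 1) (pos a)) ∧ occ (w (a + 1) (pos a + 1))

/-- Number (0 or 1) of caps contributed by the `a`-th step. -/
noncomputable def levelCapCount (w : ℕ → ℤ → WLabel) (pos : ℕ → ℤ) (a : ℕ) : ℤ :=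
  if capStep w pos a then 1 else 0

/-- Number (0 or 1) of clockwise caps contributed by the `a`-th step (a cap is
clockwise iff its left endpoint is labelled `∧`). -/
noncomputable def levelCapClock (w : ℕ → ℤ → WLabel) (pos : ℕ → ℤ) (a : ℕ) : ℤ :=
  if capStep w pos a ∧ w a (pos a) = .up then 1 else 0

/-- Number (0 or 1) of clockwise cups contributed by the `a`-th step (a cup is
clockwise iff its left endpoint is labelled `∧`). -/
noncomputable def levelCupClock (w : ℕ → ℤ → WLabel) (pos : ℕ → ℤ) (a : ℕ) : ℤ :=
  if cupStep w pos a ∧ w (a + 1) (pos a) = .up then 1 else 0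

/-- The edge degree of the `a`-th step of the tableau, given by the local
label table: for an `E`-move, `deg = 1` for `×∘→∧∨`, `deg = −1` for `∨∧→∘×`,
`deg = 0` otherwise; for an `F`-move, `deg = 1` for `∘×→∧∨`, `deg = −1` for
`∨∧→×∘`, `deg = 0` otherwise. -/
noncomputable def stepDegree (R : ℕ → Bool) (w : ℕ → ℤ → WLabel)
    (pos : ℕ → ℤ) (a : ℕ) : ℤ :=
  if R a then
    (if (w a (pos a), w a (pos a + 1)) = (.x, .o) ∧
        (w (a + 1) (pos a), w (a + 1) (pos a + 1)) = (.up, .down) then 1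
     else if (w a (pos a), w a (pos a + 1)) = (.down, .up) then -1 else 0)
  else
    (if (w a (pos a), w a (pos a + 1)) = (.o, .x) ∧
        (w (a + 1) (pos a), w (a + 1) (pos a + 1)) = (.up, .down) then 1
     else if (w a (pos a), w a (pos a + 1)) = (.down, .up) then -1 else 0)

lemma step_deg_eq (R : ℕ → Bool) (w : ℕ → ℤ → WLabel) (pos : ℕ → ℤ) (a : ℕ)
    (h : if R a then
      EPattern (w a (pos a), w a (pos a + 1)) (w (a + 1) (pos a), w (a + 1) (pos a + 1))
    else
      FPattern (w a (pos a), w a (pos a + 1)) (w (a + 1) (pos a), w (a + 1) (pos a + 1))) :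
    levelCupClock w pos a + levelCapClock w pos a - levelCapCount w pos a
      = stepDegree R w pos a := by
  cases hR : R a <;> simp only [hR, if_true, if_false, Bool.false_eq_true] at h <;>
    [skip; skip] <;>
    simp only [EPattern, FPattern, Prod.mk.injEq] at h <;>
    rcases h with ⟨⟨h1,h2⟩,h3,h4⟩|⟨⟨h1,h2⟩,h3,h4⟩|⟨⟨h1,h2⟩,h3,h4⟩|⟨⟨h1,h2⟩,h3,h4⟩|⟨⟨h1,h2⟩,h3,h4⟩|⟨⟨h1,h2⟩,h3,h4⟩|⟨⟨h1,h2⟩,h3,h4⟩|⟨⟨h1,h2⟩,h3,h4⟩ <;>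
    simp [levelCupClock, levelCapClock, levelCapCount, stepDegree, cupStep, capStep,
      occ, hR, h1, h2, h3, h4, Prod.ext_iff]

/-- for an `R`-tableau `T = (w, pos)` of type `η`, the degree
`deg(T) = deg(T̲) − caps(T̲)` — where `deg(T̲)` is the total number of
clockwise cups and caps of the stacked diagram `T̲` (including the glued cup
diagram `η̲`, oriented by `w 0`) and `caps(T̲)` is its total number of caps —
equals `deg(η̲ λ⁽⁰⁾)` plus the sum of the edge degrees of the steps. -/
theorem tableau_degree_formula (N : ℕ) (R : ℕ → Bool) (η : ℤ → WLabel)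
    (w : ℕ → ℤ → WLabel) (pos : ℕ → ℤ)
    (hchain : TableauChain N R w pos) (hη : ConsistentType η (w 0)) :
    ((cupDiagramDeg η (w 0) : ℤ)
        + ∑ a ∈ Finset.range N, (levelCupClock w pos a + levelCapClock w pos a))
      - ∑ a ∈ Finset.range N, levelCapCount w pos a
    = (cupDiagramDeg η (w 0) : ℤ) + ∑ a ∈ Finset.range N, stepDegree R w pos a := by
  have : ∑ a ∈ Finset.range N, (levelCupClock w pos a + levelCapClock w pos a)
      - ∑ a ∈ Finset.range N, levelCapCount w pos a
      = ∑ a ∈ Finset.range N, stepDegree R w pos a := by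
    rw [← Finset.sum_sub_distrib]
    refine Finset.sum_congr rfl fun a ha => ?_
    exact step_deg_eq R w pos a ((hchain a (Finset.mem_range.mp ha)).2)
  omega
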